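/- The 2×2 complex matrices B_2 = [[i,1],[0,1]] and B_3 = [[1,0],[-i,i]] are complex reflections of order 4 satisfying the braid relation B_2B_3B_2 = B_3B_2B_3, and B_4 = [[1,-1],[0,i]] lies in the group they generate; in fact B_4 = B_3B_2B_3B_2B_3. Moreover the group generated by B_2 and B_3 has order 96. -/
import Mathlib

set_option maxRecDepth 100000
set_option maxHeartbeats 1000000

open Matrix

namespace G8Aux

/-- A 2×2 matrix over the Gaussian integers, as a bare quadruple with
explicit multiplication, so that the kernel can compute quickly. -/
structure Q where
  a : GaussianInt
  b : GaussianInt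
  c : GaussianInt
  d : GaussianInt
deriving DecidableEq

instance : Mul Q :=
  ⟨fun x y => ⟨x.a * y.a + x.b * y.c, x.a * y.b + x.b * y.d,
               x.c * y.a + x.d * y.c, x.c * y.b + x.d * y.d⟩⟩

instance : One Q := ⟨⟨1, 0, 0, 1⟩⟩

lemma mul_def (x y : Q) : x * y =
    ⟨x.a * y.a + x.b * y.c, x.a * y.b + x.b * y.d,
     x.c * y.a + x.d * y.c, x.c * y.b + x.d * y.d⟩ := rfl

lemma one_def : (1 : Q) = ⟨1, 0, 0, 1⟩ := rfl

instance : Monoid Q where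
  mul_assoc x y z := by
    simp only [mul_def, Q.mk.injEq]
    and_intros <;> ring
  one_mul x := by
    cases x; simp [mul_def, one_def]
  mul_one x := by
    cases x; simp [mul_def, one_def]

def q₂ : Q := ⟨⟨0,1⟩, 1, 0, 1⟩
def q₃ : Q := ⟨1, 0, ⟨0,-1⟩, ⟨0,1⟩⟩
def q₄ : Q := ⟨1, ⟨-1,0⟩, 0, ⟨0,1⟩⟩

def g : Bool → Q := fun b => if b then q₃ else q₂

def W : List (List Bool) := [[],
  [false],
  [true],
  [false, false],
  [false, true],
  [true, false],
  [true, true],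
  [false, false, false],
  [false, false, true],
  [false, true, false],
  [false, true, true],
  [true, false, false],
  [true, true, false],
  [true, true, true],
  [false, false, false, true],
  [false, false, true, false],
  [false, false, true, true],
  [false, true, false, false],
  [false, true, true, false],
  [false, true, true, true],
  [true, false, false, false],
  [true, false, false, true],
  [true, true, false, false],
  [true, true, true, false],
  [false, false, false, true, false],
  [false, false, false, true, true],
  [false, false, true, false, false],
  [false, false, true, true, false],
  [false, false, true, true, true],
  [false, true, false, false, false],
  [false, true, false, false, true],
  [false, true, true, false, false],
  [false, true, true, true, false],
  [true, false, false, false, true],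
  [true, false, false, true, true],
  [true, true, false, false, false],
  [true, true, false, false, true],
  [true, true, true, false, false],
  [false, false, false, true, false, false],
  [false, false, false, true, true, false],
  [false, false, false, true, true, true],
  [false, false, true, false, false, false],
  [false, false, true, false, false, true],
  [false, false, true, true, false, false],
  [false, false, true, true, true, false],
  [false, true, false, false, false, true],
  [false, true, false, false, true, true],
  [false, true, true, false, false, false],
  [false, true, true, false, false, true],
  [false, true, true, true, false, false],
  [true, false, false, false, true, true],
  [true, false, false, true, true, false],
  [true, true, false, false, false, true],
  [true, true, false, false, true, true],
  [true, true, true, false, false, false],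
  [false, false, false, true, false, false, false],
  [false, false, false, true, false, false, true],
  [false, false, false, true, true, false, false],
  [false, false, false, true, true, true, false],
  [false, false, true, false, false, false, true],
  [false, false, true, false, false, true, true],
  [false, false, true, true, false, false, false],
  [false, false, true, true, false, false, true],
  [false, false, true, true, true, false, false],
  [false, true, false, false, false, true, true],
  [false, true, false, false, true, true, false],
  [false, true, true, false, false, false, true],
  [false, true, true, false, false, true, true],
  [false, true, true, true, false, false, false],
  [true, false, false, false, true, true, false],
  [true, true, false, false, false, true, true],
  [false, false, false, true, false, false, false, true],
  [false, false, false, true, false, false, true, true],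
  [false, false, false, true, true, false, false, false],
  [false, false, false, true, true, false, false, true],
  [false, false, false, true, true, true, false, false],
  [false, false, true, false, false, false, true, true],
  [false, false, true, false, false, true, true, false],
  [false, false, true, true, false, false, false, true],
  [false, false, true, true, false, false, true, true],
  [false, false, true, true, true, false, false, false],
  [false, true, false, false, false, true, true, false],
  [false, true, true, false, false, false, true, true],
  [true, false, false, false, true, true, false, false],
  [false, false, false, true, false, false, false, true, true],
  [false, false, false, true, false, false, true, true, false],
  [false, false, false, true, true, false, false, false, true],
  [false, false, false, true, true, false, false, true, true],
  [false, false, false, true, true, true, false, false, false],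
  [false, false, true, false, false, false, true, true, false],
  [false, false, true, true, false, false, false, true, true],
  [false, true, false, false, false, true, true, false, false],
  [false, false, false, true, false, false, false, true, true, false],
  [false, false, false, true, true, false, false, false, true, true],
  [false, false, true, false, false, false, true, true, false, false],
  [false, false, false, true, false, false, false, true, true, false, false]]

def LL : List Q := [Q.mk (Zsqrtd.mk 1 0) (Zsqrtd.mk 0 0) (Zsqrtd.mk 0 0) (Zsqrtd.mk 1 0),
  Q.mk (Zsqrtd.mk 0 1) (Zsqrtd.mk 1 0) (Zsqrtd.mk 0 0) (Zsqrtd.mk 1 0),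
  Q.mk (Zsqrtd.mk 1 0) (Zsqrtd.mk 0 0) (Zsqrtd.mk 0 (-1)) (Zsqrtd.mk 0 1),
  Q.mk (Zsqrtd.mk (-1) 0) (Zsqrtd.mk 1 1) (Zsqrtd.mk 0 0) (Zsqrtd.mk 1 0),
  Q.mk (Zsqrtd.mk 0 0) (Zsqrtd.mk 0 1) (Zsqrtd.mk 0 (-1)) (Zsqrtd.mk 0 1),
  Q.mk (Zsqrtd.mk 0 1) (Zsqrtd.mk 1 0) (Zsqrtd.mk 1 0) (Zsqrtd.mk 0 0),
  Q.mk (Zsqrtd.mk 1 0) (Zsqrtd.mk 0 0) (Zsqrtd.mk 1 (-1)) (Zsqrtd.mk (-1) 0),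
  Q.mk (Zsqrtd.mk 0 (-1)) (Zsqrtd.mk 0 1) (Zsqrtd.mk 0 0) (Zsqrtd.mk 1 0),
  Q.mk (Zsqrtd.mk 0 (-1)) (Zsqrtd.mk (-1) 1) (Zsqrtd.mk 0 (-1)) (Zsqrtd.mk 0 1),
  Q.mk (Zsqrtd.mk 0 0) (Zsqrtd.mk 0 1) (Zsqrtd.mk 1 0) (Zsqrtd.mk 0 0),
  Q.mk (Zsqrtd.mk 1 0) (Zsqrtd.mk (-1) 0) (Zsqrtd.mk 1 (-1)) (Zsqrtd.mk (-1) 0),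
  Q.mk (Zsqrtd.mk (-1) 0) (Zsqrtd.mk 1 1) (Zsqrtd.mk 0 1) (Zsqrtd.mk 1 0),
  Q.mk (Zsqrtd.mk 0 1) (Zsqrtd.mk 1 0) (Zsqrtd.mk 1 1) (Zsqrtd.mk 0 (-1)),
  Q.mk (Zsqrtd.mk 1 0) (Zsqrtd.mk 0 0) (Zsqrtd.mk 1 0) (Zsqrtd.mk 0 (-1)),
  Q.mk (Zsqrtd.mk 1 (-1)) (Zsqrtd.mk (-1) 0) (Zsqrtd.mk 0 (-1)) (Zsqrtd.mk 0 1),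
  Q.mk (Zsqrtd.mk 1 0) (Zsqrtd.mk (-1) 0) (Zsqrtd.mk 1 0) (Zsqrtd.mk 0 0),
  Q.mk (Zsqrtd.mk 1 0) (Zsqrtd.mk (-1) (-1)) (Zsqrtd.mk 1 (-1)) (Zsqrtd.mk (-1) 0),
  Q.mk (Zsqrtd.mk 0 0) (Zsqrtd.mk 0 1) (Zsqrtd.mk 0 1) (Zsqrtd.mk 1 0),
  Q.mk (Zsqrtd.mk 0 1) (Zsqrtd.mk 0 0) (Zsqrtd.mk 1 1) (Zsqrtd.mk 0 (-1)),
  Q.mk (Zsqrtd.mk 1 1) (Zsqrtd.mk 0 (-1)) (Zsqrtd.mk 1 0) (Zsqrtd.mk 0 (-1)),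
  Q.mk (Zsqrtd.mk 0 (-1)) (Zsqrtd.mk 0 1) (Zsqrtd.mk (-1) 0) (Zsqrtd.mk 1 1),
  Q.mk (Zsqrtd.mk 0 (-1)) (Zsqrtd.mk (-1) 1) (Zsqrtd.mk 0 0) (Zsqrtd.mk 0 1),
  Q.mk (Zsqrtd.mk (-1) 0) (Zsqrtd.mk 1 1) (Zsqrtd.mk (-1) 1) (Zsqrtd.mk 1 0),
  Q.mk (Zsqrtd.mk 0 1) (Zsqrtd.mk 1 0) (Zsqrtd.mk 0 1) (Zsqrtd.mk 1 (-1)),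
  Q.mk (Zsqrtd.mk 1 1) (Zsqrtd.mk 0 (-1)) (Zsqrtd.mk 1 0) (Zsqrtd.mk 0 0),
  Q.mk (Zsqrtd.mk 1 0) (Zsqrtd.mk 0 (-1)) (Zsqrtd.mk 1 (-1)) (Zsqrtd.mk (-1) 0),
  Q.mk (Zsqrtd.mk 0 1) (Zsqrtd.mk 0 0) (Zsqrtd.mk 0 1) (Zsqrtd.mk 1 0),
  Q.mk (Zsqrtd.mk 0 1) (Zsqrtd.mk 0 (-1)) (Zsqrtd.mk 1 1) (Zsqrtd.mk 0 (-1)),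
  Q.mk (Zsqrtd.mk 0 1) (Zsqrtd.mk 1 (-1)) (Zsqrtd.mk 1 0) (Zsqrtd.mk 0 (-1)),
  Q.mk (Zsqrtd.mk 0 0) (Zsqrtd.mk 0 1) (Zsqrtd.mk (-1) 0) (Zsqrtd.mk 1 1),
  Q.mk (Zsqrtd.mk 1 0) (Zsqrtd.mk (-1) 0) (Zsqrtd.mk 0 0) (Zsqrtd.mk 0 1),
  Q.mk (Zsqrtd.mk (-1) 0) (Zsqrtd.mk 0 1) (Zsqrtd.mk (-1) 1) (Zsqrtd.mk 1 0),
  Q.mk (Zsqrtd.mk (-1) 1) (Zsqrtd.mk 1 0) (Zsqrtd.mk 0 1) (Zsqrtd.mk 1 (-1)),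
  Q.mk (Zsqrtd.mk 1 (-1)) (Zsqrtd.mk (-1) 0) (Zsqrtd.mk 0 (-1)) (Zsqrtd.mk (-1) 1),
  Q.mk (Zsqrtd.mk 1 0) (Zsqrtd.mk (-1) (-1)) (Zsqrtd.mk 1 0) (Zsqrtd.mk (-1) 0),
  Q.mk (Zsqrtd.mk 0 (-1)) (Zsqrtd.mk 0 1) (Zsqrtd.mk (-1) (-1)) (Zsqrtd.mk 0 1),
  Q.mk (Zsqrtd.mk 0 (-1)) (Zsqrtd.mk (-1) 1) (Zsqrtd.mk (-1) 0) (Zsqrtd.mk 0 1),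
  Q.mk (Zsqrtd.mk (-1) 0) (Zsqrtd.mk 1 1) (Zsqrtd.mk (-1) 0) (Zsqrtd.mk 1 0),
  Q.mk (Zsqrtd.mk (-1) 1) (Zsqrtd.mk 1 0) (Zsqrtd.mk 0 1) (Zsqrtd.mk 1 0),
  Q.mk (Zsqrtd.mk 0 1) (Zsqrtd.mk 1 (-1)) (Zsqrtd.mk 1 1) (Zsqrtd.mk 0 (-1)),
  Q.mk (Zsqrtd.mk 0 0) (Zsqrtd.mk 1 0) (Zsqrtd.mk 1 0) (Zsqrtd.mk 0 (-1)),
  Q.mk (Zsqrtd.mk (-1) 0) (Zsqrtd.mk 0 1) (Zsqrtd.mk (-1) 0) (Zsqrtd.mk 1 1),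
  Q.mk (Zsqrtd.mk 0 1) (Zsqrtd.mk 0 0) (Zsqrtd.mk 0 0) (Zsqrtd.mk 0 1),
  Q.mk (Zsqrtd.mk (-1) 0) (Zsqrtd.mk 0 0) (Zsqrtd.mk (-1) 1) (Zsqrtd.mk 1 0),
  Q.mk (Zsqrtd.mk (-1) 0) (Zsqrtd.mk 1 0) (Zsqrtd.mk 0 1) (Zsqrtd.mk 1 (-1)),
  Q.mk (Zsqrtd.mk 1 0) (Zsqrtd.mk (-1) 0) (Zsqrtd.mk 0 (-1)) (Zsqrtd.mk (-1) 1),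
  Q.mk (Zsqrtd.mk 1 1) (Zsqrtd.mk 0 (-1)) (Zsqrtd.mk 1 0) (Zsqrtd.mk (-1) 0),
  Q.mk (Zsqrtd.mk 0 (-1)) (Zsqrtd.mk (-1) 1) (Zsqrtd.mk (-1) (-1)) (Zsqrtd.mk 0 1),
  Q.mk (Zsqrtd.mk 0 0) (Zsqrtd.mk (-1) 0) (Zsqrtd.mk (-1) 0) (Zsqrtd.mk 0 1),
  Q.mk (Zsqrtd.mk (-1) (-1)) (Zsqrtd.mk 0 1) (Zsqrtd.mk (-1) 0) (Zsqrtd.mk 1 0),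
  Q.mk (Zsqrtd.mk 1 0) (Zsqrtd.mk 0 (-1)) (Zsqrtd.mk 1 0) (Zsqrtd.mk (-1) (-1)),
  Q.mk (Zsqrtd.mk 0 1) (Zsqrtd.mk 0 (-1)) (Zsqrtd.mk 0 1) (Zsqrtd.mk 0 0),
  Q.mk (Zsqrtd.mk 1 (-1)) (Zsqrtd.mk (-1) 0) (Zsqrtd.mk 0 (-1)) (Zsqrtd.mk (-1) 0),
  Q.mk (Zsqrtd.mk 1 0) (Zsqrtd.mk (-1) (-1)) (Zsqrtd.mk 0 0) (Zsqrtd.mk (-1) 0),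
  Q.mk (Zsqrtd.mk 0 (-1)) (Zsqrtd.mk 0 1) (Zsqrtd.mk 0 (-1)) (Zsqrtd.mk 0 0),
  Q.mk (Zsqrtd.mk (-1) (-1)) (Zsqrtd.mk 0 1) (Zsqrtd.mk (-1) 0) (Zsqrtd.mk 1 1),
  Q.mk (Zsqrtd.mk (-1) 0) (Zsqrtd.mk 0 1) (Zsqrtd.mk 0 0) (Zsqrtd.mk 0 1),
  Q.mk (Zsqrtd.mk (-1) 0) (Zsqrtd.mk 1 0) (Zsqrtd.mk (-1) 1) (Zsqrtd.mk 1 0),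
  Q.mk (Zsqrtd.mk 0 0) (Zsqrtd.mk 1 0) (Zsqrtd.mk 0 1) (Zsqrtd.mk 1 (-1)),
  Q.mk (Zsqrtd.mk 0 0) (Zsqrtd.mk (-1) 0) (Zsqrtd.mk 0 (-1)) (Zsqrtd.mk (-1) 1),
  Q.mk (Zsqrtd.mk 0 1) (Zsqrtd.mk 0 0) (Zsqrtd.mk 1 0) (Zsqrtd.mk (-1) 0),
  Q.mk (Zsqrtd.mk 0 (-1)) (Zsqrtd.mk (-1) 0) (Zsqrtd.mk (-1) (-1)) (Zsqrtd.mk 0 1),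
  Q.mk (Zsqrtd.mk (-1) 0) (Zsqrtd.mk 0 0) (Zsqrtd.mk (-1) 0) (Zsqrtd.mk 0 1),
  Q.mk (Zsqrtd.mk 0 (-1)) (Zsqrtd.mk 0 0) (Zsqrtd.mk (-1) 0) (Zsqrtd.mk 1 0),
  Q.mk (Zsqrtd.mk 1 1) (Zsqrtd.mk 0 (-1)) (Zsqrtd.mk 1 0) (Zsqrtd.mk (-1) (-1)),
  Q.mk (Zsqrtd.mk (-1) 1) (Zsqrtd.mk 1 0) (Zsqrtd.mk 0 1) (Zsqrtd.mk 0 0),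
  Q.mk (Zsqrtd.mk 1 0) (Zsqrtd.mk (-1) (-1)) (Zsqrtd.mk 0 (-1)) (Zsqrtd.mk (-1) 0),
  Q.mk (Zsqrtd.mk 0 1) (Zsqrtd.mk 0 (-1)) (Zsqrtd.mk 0 0) (Zsqrtd.mk (-1) 0),
  Q.mk (Zsqrtd.mk 1 (-1)) (Zsqrtd.mk (-1) 0) (Zsqrtd.mk 0 (-1)) (Zsqrtd.mk 0 0),
  Q.mk (Zsqrtd.mk 0 1) (Zsqrtd.mk 1 (-1)) (Zsqrtd.mk 0 1) (Zsqrtd.mk 0 (-1)),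
  Q.mk (Zsqrtd.mk 1 0) (Zsqrtd.mk 0 (-1)) (Zsqrtd.mk 0 0) (Zsqrtd.mk 0 (-1)),
  Q.mk (Zsqrtd.mk 0 (-1)) (Zsqrtd.mk (-1) 0) (Zsqrtd.mk 0 (-1)) (Zsqrtd.mk (-1) 1),
  Q.mk (Zsqrtd.mk 0 0) (Zsqrtd.mk (-1) 0) (Zsqrtd.mk 1 0) (Zsqrtd.mk (-1) 0),
  Q.mk (Zsqrtd.mk 0 (-1)) (Zsqrtd.mk 0 0) (Zsqrtd.mk (-1) (-1)) (Zsqrtd.mk 0 1),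
  Q.mk (Zsqrtd.mk (-1) (-1)) (Zsqrtd.mk 0 1) (Zsqrtd.mk (-1) 0) (Zsqrtd.mk 0 1),
  Q.mk (Zsqrtd.mk 0 0) (Zsqrtd.mk 1 0) (Zsqrtd.mk (-1) 0) (Zsqrtd.mk 1 0),
  Q.mk (Zsqrtd.mk 0 1) (Zsqrtd.mk 0 (-1)) (Zsqrtd.mk 1 0) (Zsqrtd.mk (-1) (-1)),
  Q.mk (Zsqrtd.mk (-1) 0) (Zsqrtd.mk 0 1) (Zsqrtd.mk 0 1) (Zsqrtd.mk 0 0),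
  Q.mk (Zsqrtd.mk 0 0) (Zsqrtd.mk 0 (-1)) (Zsqrtd.mk 0 (-1)) (Zsqrtd.mk (-1) 0),
  Q.mk (Zsqrtd.mk (-1) 0) (Zsqrtd.mk 0 0) (Zsqrtd.mk 0 0) (Zsqrtd.mk (-1) 0),
  Q.mk (Zsqrtd.mk 1 0) (Zsqrtd.mk 0 (-1)) (Zsqrtd.mk 0 (-1)) (Zsqrtd.mk 0 0),
  Q.mk (Zsqrtd.mk (-1) 1) (Zsqrtd.mk 1 0) (Zsqrtd.mk 0 1) (Zsqrtd.mk 0 (-1)),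
  Q.mk (Zsqrtd.mk 0 1) (Zsqrtd.mk 1 (-1)) (Zsqrtd.mk 0 0) (Zsqrtd.mk 0 (-1)),
  Q.mk (Zsqrtd.mk (-1) 0) (Zsqrtd.mk 1 0) (Zsqrtd.mk (-1) 0) (Zsqrtd.mk 0 0),
  Q.mk (Zsqrtd.mk 0 0) (Zsqrtd.mk 0 (-1)) (Zsqrtd.mk 1 0) (Zsqrtd.mk (-1) (-1)),
  Q.mk (Zsqrtd.mk 0 0) (Zsqrtd.mk (-1) 0) (Zsqrtd.mk 0 1) (Zsqrtd.mk 0 0),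
  Q.mk (Zsqrtd.mk 0 (-1)) (Zsqrtd.mk 0 0) (Zsqrtd.mk 0 (-1)) (Zsqrtd.mk (-1) 0),
  Q.mk (Zsqrtd.mk 0 (-1)) (Zsqrtd.mk (-1) 0) (Zsqrtd.mk 0 0) (Zsqrtd.mk (-1) 0),
  Q.mk (Zsqrtd.mk 0 0) (Zsqrtd.mk 1 0) (Zsqrtd.mk 0 (-1)) (Zsqrtd.mk 0 0),
  Q.mk (Zsqrtd.mk (-1) 0) (Zsqrtd.mk 0 0) (Zsqrtd.mk 0 1) (Zsqrtd.mk 0 (-1)),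
  Q.mk (Zsqrtd.mk (-1) 0) (Zsqrtd.mk 1 0) (Zsqrtd.mk 0 0) (Zsqrtd.mk 0 (-1)),
  Q.mk (Zsqrtd.mk (-1) (-1)) (Zsqrtd.mk 0 1) (Zsqrtd.mk (-1) 0) (Zsqrtd.mk 0 0),
  Q.mk (Zsqrtd.mk 0 0) (Zsqrtd.mk 0 (-1)) (Zsqrtd.mk 0 1) (Zsqrtd.mk 0 (-1)),
  Q.mk (Zsqrtd.mk 0 (-1)) (Zsqrtd.mk 0 0) (Zsqrtd.mk 0 0) (Zsqrtd.mk 0 (-1)),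
  Q.mk (Zsqrtd.mk 0 (-1)) (Zsqrtd.mk (-1) 0) (Zsqrtd.mk (-1) 0) (Zsqrtd.mk 0 0),
  Q.mk (Zsqrtd.mk 0 0) (Zsqrtd.mk 0 (-1)) (Zsqrtd.mk (-1) 0) (Zsqrtd.mk 0 0)]

lemma LL_eq : LL = W.map (fun w => (w.map g).prod) := by decide

lemma one_mem_LL : (1 : Q) ∈ LL := by decide

lemma step : ∀ x ∈ LL, q₂ * x ∈ LL ∧ q₃ * x ∈ LL := by decide

lemma LL_card : LL.toFinset.card = 96 := by decide

lemma LL_subset_closure : ∀ x ∈ LL, x ∈ Submonoid.closure {q₂, q₃} := by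
  intro x hx
  rw [LL_eq] at hx
  simp only [List.mem_map] at hx
  obtain ⟨w, -, rfl⟩ := hx
  refine Submonoid.list_prod_mem _ ?_
  intro y hy
  simp only [List.mem_map] at hy
  obtain ⟨b, -, rfl⟩ := hy
  cases b <;>
    exact Submonoid.subset_closure (by simp [g])

lemma closure_subset_LL : ∀ x ∈ Submonoid.closure {q₂, q₃}, x ∈ LL := by
  have key : ∀ c ∈ Submonoid.closure ({q₂, q₃} : Set Q), ∀ x ∈ LL, c * x ∈ LL := by
    intro c hc
    induction hc using Submonoid.closure_induction with
    | mem y hy =>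
      rcases hy with rfl | rfl
      · exact fun x hx => (step x hx).1
      · exact fun x hx => (step x hx).2
    | one => intro x hx; simpa using hx
    | mul a b _ _ iha ihb =>
      intro x hx
      rw [mul_assoc]
      exact iha _ (ihb _ hx)
  intro x hx
  simpa using key x hx 1 one_mem_LL

lemma closure_coe_eq : (Submonoid.closure {q₂, q₃} : Set Q) = (LL.toFinset : Set Q) := by
  ext x
  simp only [SetLike.mem_coe, Finset.mem_coe, List.mem_toFinset]
  exact ⟨closure_subset_LL x, LL_subset_closure x⟩

lemma card_closure_Q : Nat.card (Submonoid.closure ({q₂, q₃} : Set Q)) = 96 := by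
  have h : Nat.card (Submonoid.closure ({q₂, q₃} : Set Q))
      = Nat.card ((LL.toFinset : Set Q)) :=
    congrArg Nat.card (congrArg Set.Elem closure_coe_eq)
  rw [h, Nat.card_coe_set_eq, Set.ncard_coe_finset, LL_card]

lemma pow_facts : q₂ ^ 4 = 1 ∧ q₂ ^ 2 ≠ 1 ∧ q₃ ^ 4 = 1 ∧ q₃ ^ 2 ≠ 1 := by decide

lemma braid_Q : q₂ * q₃ * q₂ = q₃ * q₂ * q₃ := by decide

lemma b4_Q : q₄ = q₃ * q₂ * q₃ * q₂ * q₃ := by decide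

/-- The embedding of `Q` into the monoid of 2×2 complex matrices. -/
noncomputable def ψ : Q →* Matrix (Fin 2) (Fin 2) ℂ where
  toFun q := !![GaussianInt.toComplex q.a, GaussianInt.toComplex q.b;
                GaussianInt.toComplex q.c, GaussianInt.toComplex q.d]
  map_one' := by
    simp only [one_def, _root_.map_one, _root_.map_zero, Matrix.one_fin_two]
  map_mul' x y := by
    simp only [mul_def, _root_.map_add, _root_.map_mul, Matrix.mul_fin_two]

lemma ψ_injective : Function.Injective ψ := by
  intro x y h
  simp only [ψ, MonoidHom.coe_mk, OneHom.coe_mk] at h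
  have h00 := congrFun (congrFun h 0) 0
  have h01 := congrFun (congrFun h 0) 1
  have h10 := congrFun (congrFun h 1) 0
  have h11 := congrFun (congrFun h 1) 1
  simp only [Matrix.cons_val', Matrix.cons_val_zero, Matrix.cons_val_one, Matrix.head_cons,
    Matrix.empty_val', Matrix.cons_val_fin_one, Matrix.head_fin_const,
    Matrix.of_apply] at h00 h01 h10 h11
  cases x; cases y
  simp only [Q.mk.injEq]
  exact ⟨GaussianInt.toComplex_injective h00, GaussianInt.toComplex_injective h01,
    GaussianInt.toComplex_injective h10, GaussianInt.toComplex_injective h11⟩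

lemma toC : GaussianInt.toComplex ⟨0,1⟩ = Complex.I ∧
    GaussianInt.toComplex ⟨0,-1⟩ = -Complex.I ∧
    GaussianInt.toComplex ⟨-1,0⟩ = -1 := by
  refine ⟨?_, ?_, ?_⟩ <;> · apply Complex.ext <;> simp

end G8Aux

open G8Aux in
/-- `B₂ = [[i,1],[0,1]]` and `B₃ = [[1,0],[-i,i]]` are complex reflections of order 4
braiding with length 3; `B₄ = [[1,-1],[0,i]]` lies in the group they generate
(indeed `B₄ = B₃B₂B₃B₂B₃`), and the group generated by `B₂, B₃` has order 96
(a copy of the Shephard-Todd group `G₈`). -/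
theorem cusp_linear_part_G8
    (B₂ B₃ B₄ : Matrix (Fin 2) (Fin 2) ℂ)
    (h₂ : B₂ = !![Complex.I, 1; 0, 1])
    (h₃ : B₃ = !![1, 0; -Complex.I, Complex.I])
    (h₄ : B₄ = !![1, -1; 0, Complex.I]) :
    orderOf B₂ = 4 ∧ (B₂ - 1).rank = 1 ∧
    orderOf B₃ = 4 ∧ (B₃ - 1).rank = 1 ∧
    B₂ * B₃ * B₂ = B₃ * B₂ * B₃ ∧
    B₄ = B₃ * B₂ * B₃ * B₂ * B₃ ∧
    B₄ ∈ Submonoid.closure {B₂, B₃} ∧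
    Nat.card (Submonoid.closure {B₂, B₃} : Submonoid (Matrix (Fin 2) (Fin 2) ℂ)) = 96 := by
  obtain ⟨hI, hmI, hm1⟩ := toC
  have e₂ : B₂ = ψ q₂ := by
    simp only [ψ, MonoidHom.coe_mk, OneHom.coe_mk, q₂, _root_.map_one, _root_.map_zero, hI, h₂]
  have e₃ : B₃ = ψ q₃ := by
    simp only [ψ, MonoidHom.coe_mk, OneHom.coe_mk, q₃, _root_.map_one, _root_.map_zero, hI, hmI, h₃]
  have e₄ : B₄ = ψ q₄ := by
    simp only [ψ, MonoidHom.coe_mk, OneHom.coe_mk, q₄, _root_.map_one, _root_.map_zero, hI, hm1, h₄]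
  obtain ⟨hq24, hq22, hq34, hq32⟩ := pow_facts
  have ho₂ : orderOf B₂ = 4 := by
    rw [e₂, orderOf_injective ψ ψ_injective]
    have := orderOf_eq_prime_pow (x := q₂) (p := 2) (n := 1)
      (by rw [show (2:ℕ)^1 = 2 from rfl]; exact hq22)
      (by rw [show (2:ℕ)^(1+1) = 4 from rfl]; exact hq24)
    simpa using this
  have ho₃ : orderOf B₃ = 4 := by
    rw [e₃, orderOf_injective ψ ψ_injective]
    have := orderOf_eq_prime_pow (x := q₃) (p := 2) (n := 1)
      (by rw [show (2:ℕ)^1 = 2 from rfl]; exact hq32)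
      (by rw [show (2:ℕ)^(1+1) = 4 from rfl]; exact hq34)
    simpa using this
  have rank_one_of : ∀ (A : Matrix (Fin 2) (Fin 2) ℂ) (C : Matrix (Fin 2) (Fin 1) ℂ)
      (Rr : Matrix (Fin 1) (Fin 2) ℂ), A = C * Rr → A ≠ 0 → A.rank = 1 := by
    intro A C Rr hA h0
    have h1 : A.rank ≤ 1 := by
      calc A.rank ≤ C.rank := hA ▸ Matrix.rank_mul_le_left C Rr
      _ ≤ 1 := by simpa using Matrix.rank_le_card_width C
    have h2 : A.rank ≠ 0 := by
      intro hr
      apply h0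
      unfold Matrix.rank at hr
      rw [Submodule.finrank_eq_zero, LinearMap.range_eq_bot] at hr
      ext i j
      have hz : A.mulVec (Pi.single j 1) = 0 := by
        rw [← Matrix.mulVecLin_apply, hr]; rfl
      have := congrFun hz i
      simpa [Matrix.mulVec_single] using this
    omega
  have hr₂ : (B₂ - 1).rank = 1 := by
    refine rank_one_of _ !![(1:ℂ); 0] !![Complex.I - 1, 1] ?_ ?_
    · rw [h₂]
      ext i j
      fin_cases i <;> fin_cases j <;>
        simp [Matrix.mul_apply, Matrix.one_apply, Fin.sum_univ_succ]
    · intro hz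
      have := congrFun (congrFun hz 0) 1
      rw [h₂] at this
      simp [Matrix.one_apply] at this
  have hr₃ : (B₃ - 1).rank = 1 := by
    refine rank_one_of _ !![(0:ℂ); 1] !![-Complex.I, Complex.I - 1] ?_ ?_
    · rw [h₃]
      ext i j
      fin_cases i <;> fin_cases j <;>
        simp [Matrix.mul_apply, Matrix.one_apply, Fin.sum_univ_succ]
    · intro hz
      have := congrFun (congrFun hz 1) 0
      rw [h₃] at this
      simp [Matrix.one_apply] at this
  have hbraid : B₂ * B₃ * B₂ = B₃ * B₂ * B₃ := by
    rw [e₂, e₃, ← _root_.map_mul, ← _root_.map_mul, ← _root_.map_mul, ← _root_.map_mul, braid_Q]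
  have hb4 : B₄ = B₃ * B₂ * B₃ * B₂ * B₃ := by
    rw [e₂, e₃, e₄, ← _root_.map_mul, ← _root_.map_mul, ← _root_.map_mul, ← _root_.map_mul, ← b4_Q]
  have hmem : B₄ ∈ Submonoid.closure {B₂, B₃} := by
    rw [hb4]
    have m₂ : B₂ ∈ Submonoid.closure ({B₂, B₃} : Set (Matrix (Fin 2) (Fin 2) ℂ)) :=
      Submonoid.subset_closure (by simp)
    have m₃ : B₃ ∈ Submonoid.closure ({B₂, B₃} : Set (Matrix (Fin 2) (Fin 2) ℂ)) :=
      Submonoid.subset_closure (by simp)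
    exact mul_mem (mul_mem (mul_mem (mul_mem m₃ m₂) m₃) m₂) m₃
  have hset : ({B₂, B₃} : Set (Matrix (Fin 2) (Fin 2) ℂ)) = ψ '' {q₂, q₃} := by
    rw [Set.image_pair, e₂, e₃]
  have hcard : Nat.card (Submonoid.closure {B₂, B₃} :
      Submonoid (Matrix (Fin 2) (Fin 2) ℂ)) = 96 := by
    rw [hset, ← MonoidHom.map_mclosure]
    calc Nat.card (Submonoid.map ψ (Submonoid.closure {q₂, q₃}))
        = Nat.card (ψ '' (Submonoid.closure {q₂, q₃} : Set Q)) := rfl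
      _ = Nat.card (Submonoid.closure ({q₂, q₃} : Set Q) : Set Q) :=
          Nat.card_image_of_injective ψ_injective _
      _ = 96 := card_closure_Q
  exact ⟨ho₂, hr₂, ho₃, hr₃, hbraid, hb4, hmem, hcard⟩
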